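/- For any two orthogonal pure states |ψ₁⟩, |ψ₂⟩ of a bipartite system ℂ^{d_A} ⊗ ℂ^{d_B}, there exists an orthonormal basis {|a_k⟩} of ℂ^{d_A} such that, writing |ψ_i⟩ = Σ_k |a_k⟩ ⊗ |η^i_k⟩, the unnormalized conditional states satisfy ⟨η^1_k | η^2_k⟩ = 0 for every k. -/

import Mathlib

/-!
Tracing out Bob turns the conditional inner products into a quadratic form on Alice's space:
`⟪η¹_a, η²_a⟫ = ⟪a, M a⟫` with `M = Tr_B |ψ₂⟩⟨ψ₁|`, and `tr M = ⟪ψ₁, ψ₂⟫ = 0`. So it suffices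
that every traceless operator `T` has zero diagonal in some orthonormal basis. By the
Toeplitz–Hausdorff theorem the numerical range `{⟪v, T v⟫ : ‖v‖ = 1}` is convex, hence contains
the average `0` of the diagonal entries of `T` in any orthonormal basis. A unit vector `v` with
`⟪v, T v⟫ = 0` is the first basis vector; the compression of `T` to `v^⊥` is again traceless, and
induction on the dimension supplies the rest of the basis.
-/

open scoped InnerProductSpace

noncomputable section

/-- The (possibly zero, unnormalized) component of `ψ` on Bob's side along Alice's vector `a`:
`|η⟩ = (⟨a| ⊗ I)|ψ⟩`, i.e. `η b = Σ_x conj (a x) · ψ (x, b)`. -/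
def condState {dA dB : ℕ} (a : EuclideanSpace ℂ (Fin dA))
    (ψ : EuclideanSpace ℂ (Fin dA × Fin dB)) : EuclideanSpace ℂ (Fin dB) :=
  WithLp.toLp 2 (fun b => ∑ x : Fin dA, (starRingEnd ℂ) (a x) * ψ (x, b))

open scoped ComplexConjugate

theorem Complex.exists_norm_eq_one_im_mul_add_conj_mul_eq_zero (p q : ℂ) :
    ∃ c : ℂ, ‖c‖ = 1 ∧ (c * p + conj c * q).im = 0 := by
  set r := p - conj q
  set c := Complex.exp ((-r.arg : ℝ) * Complex.I)
  have hc : c * r = ‖r‖ := by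
    conv_lhs => rw [← Complex.norm_mul_exp_arg_mul_I r]
    rw [mul_left_comm, ← Complex.exp_add]
    push_cast
    simp
  refine ⟨c, Complex.norm_exp_ofReal_mul_I _, ?_⟩
  have him : (c * p + conj c * q).im = (c * r).im := by
    simp only [r, Complex.add_im, Complex.mul_im, Complex.sub_im, Complex.sub_re, Complex.conj_re,
      Complex.conj_im]
    ring
  rw [him, hc, Complex.ofReal_im]

section

variable {𝕜 E : Type*} [RCLike 𝕜] [NormedAddCommGroup E] [InnerProductSpace 𝕜 E]

theorem OrthonormalBasis.exists_coe_eq_fin_cons {n : ℕ} {v : E} (hv : ‖v‖ = 1)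
    (c : OrthonormalBasis (Fin n) 𝕜 (𝕜 ∙ v)ᗮ) :
    ∃ b : OrthonormalBasis (Fin (n + 1)) 𝕜 E, ⇑b = Fin.cons v (fun i => (c i : E)) := by
  have hvc : ∀ i, ⟪v, (c i : E)⟫_𝕜 = 0 := fun i =>
    Submodule.inner_right_of_mem_orthogonal (Submodule.mem_span_singleton_self v) (c i).2
  have hon : Orthonormal 𝕜 (Fin.cons v (fun i => (c i : E)) : Fin (n + 1) → E) := by
    rw [orthonormal_iff_ite]
    intro i j
    cases i using Fin.cases with
    | zero => cases j using Fin.cases with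
      | zero => simp [inner_self_eq_norm_sq_to_K, hv]
      | succ j => simp [hvc, (Fin.succ_ne_zero j).symm]
    | succ i => cases j using Fin.cases with
      | zero => simp [inner_eq_zero_symm.1 (hvc i), Fin.succ_ne_zero i]
      | succ j => simpa [← Submodule.coe_inner] using orthonormal_iff_ite.1 c.orthonormal i j
  refine ⟨.mkOfOrthogonalEqBot hon ?_, OrthonormalBasis.coe_of_orthogonal_eq_bot_mk _ _⟩
  refine Submodule.eq_bot_iff _ |>.2 fun u hu => ?_
  have hperp : ∀ i, ⟪(Fin.cons v (fun i => (c i : E)) : Fin (n + 1) → E) i, u⟫_𝕜 = 0 := fun i =>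
    Submodule.inner_right_of_mem_orthogonal (Submodule.subset_span (Set.mem_range_self i)) hu
  have huv : u ∈ (𝕜 ∙ v)ᗮ := Submodule.mem_orthogonal_singleton_iff_inner_right.2 (hperp 0)
  have hrepr : c.repr ⟨u, huv⟩ = 0 := by
    ext i
    simpa [OrthonormalBasis.repr_apply_apply] using hperp i.succ
  simpa using hrepr

namespace LinearMap

def compression (T : E →ₗ[𝕜] E) (K : Submodule 𝕜 E) [K.HasOrthogonalProjection] :
    K →ₗ[𝕜] K :=
  K.orthogonalProjectionOnto.toLinearMap ∘ₗ T ∘ₗ K.subtype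

theorem inner_compression_apply (T : E →ₗ[𝕜] E) (K : Submodule 𝕜 E)
    [K.HasOrthogonalProjection] (u w : K) :
    ⟪u, T.compression K w⟫_𝕜 = ⟪(u : E), T w⟫_𝕜 :=
  Submodule.inner_orthogonalProjectionOnto_eq_of_mem_left u (T w)

theorem trace_eq_inner_add_trace_compression [FiniteDimensional 𝕜 E] (T : E →ₗ[𝕜] E) {v : E}
    (hv : ‖v‖ = 1) :
    T.trace 𝕜 E = ⟪v, T v⟫_𝕜 + (T.compression (𝕜 ∙ v)ᗮ).trace 𝕜 (𝕜 ∙ v)ᗮ := by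
  set c := stdOrthonormalBasis 𝕜 (𝕜 ∙ v)ᗮ
  obtain ⟨b, hb⟩ := OrthonormalBasis.exists_coe_eq_fin_cons hv c
  simp only [trace_eq_sum_inner T b, trace_eq_sum_inner _ c, Fin.sum_univ_succ, hb,
    Fin.cons_zero, Fin.cons_succ, inner_compression_apply]

end LinearMap

end

namespace LinearMap

variable {E : Type*} [NormedAddCommGroup E] [InnerProductSpace ℂ E]

def numericalRange (T : E →ₗ[ℂ] E) : Set ℂ := {z | ∃ v, ‖v‖ = 1 ∧ ⟪v, T v⟫_ℂ = z}

theorem inner_apply_smul_self (T : E →ₗ[ℂ] E) (c : ℂ) (v : E) :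
    ⟪c • v, T (c • v)⟫_ℂ = conj c * c * ⟪v, T v⟫_ℂ := by
  rw [map_smul, inner_smul_left, inner_smul_right, mul_assoc]

theorem inner_smul_add_smul_one_apply_self (T : E →ₗ[ℂ] E) (α β : ℂ) {v : E} (hv : ‖v‖ = 1) :
    ⟪v, (α • T + β • 1 : Module.End ℂ E) v⟫_ℂ = α * ⟪v, T v⟫_ℂ + β := by
  simp [inner_self_eq_norm_sq_to_K, hv]

theorem ofReal_mem_numericalRange_of_mem_Icc {T : E →ₗ[ℂ] E} {x y : E}
    (hx : ‖x‖ = 1) (hy : ‖y‖ = 1) (hTx : ⟪x, T x⟫_ℂ = 1) (hTy : ⟪y, T y⟫_ℂ = 0)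
    (hcross : (⟪y, T x⟫_ℂ + ⟪x, T y⟫_ℂ).im = 0) {s : ℝ} (hs : s ∈ Set.Icc 0 1) :
    (s : ℂ) ∈ numericalRange T := by
  set γ := (⟪y, T x⟫_ℂ + ⟪x, T y⟫_ℂ).re
  set z : ℝ → E := fun t => ((1 - t : ℝ) : ℂ) • y + (t : ℂ) • x
  have hz : ∀ t, ⟪z t, T (z t)⟫_ℂ = ((t ^ 2 + t * (1 - t) * γ : ℝ) : ℂ) := by
    intro t
    have hγ : ⟪y, T x⟫_ℂ + ⟪x, T y⟫_ℂ = γ := Complex.ext rfl (by simpa using hcross)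
    simp only [z, map_add, map_smul, inner_add_left, inner_add_right, inner_smul_left,
      inner_smul_right, Complex.conj_ofReal, hTx, hTy]
    push_cast
    linear_combination (t : ℂ) * (1 - t) * hγ
  -- `z t = 0` would make `x` a multiple of `y`, contradicting `⟪x, T x⟫ = 1 ≠ 0 = ⟪y, T y⟫`.
  have hz_ne : ∀ t, z t ≠ 0 := by
    intro t ht
    have h := congrArg (fun u => ⟪u, T u⟫_ℂ) (eq_neg_of_add_eq_zero_left ht)
    simp only [← neg_smul, inner_apply_smul_self, hTx, hTy, map_neg, Complex.conj_ofReal] at h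
    have ht0 : (t : ℂ) ^ 2 = 0 := by linear_combination -h
    obtain rfl : t = 0 := by exact_mod_cast pow_eq_zero_iff two_ne_zero |>.1 ht0
    have hy₀ : y = 0 := by simpa [z] using ht
    simp [hy₀] at hy
  set f : ℝ → ℝ := fun t => (t ^ 2 + t * (1 - t) * γ) / ‖z t‖ ^ 2
  have hf : Continuous f :=
    (by fun_prop : Continuous _).div (by fun_prop) fun t => by simpa using hz_ne t
  obtain ⟨t, -, hft⟩ : ∃ t ∈ Set.Icc (0 : ℝ) 1, f t = s :=
    intermediate_value_Icc zero_le_one hf.continuousOn (by simpa [f, z, hx] using hs)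
  refine ⟨(‖z t‖⁻¹ : ℂ) • z t, norm_smul_inv_norm (hz_ne t), ?_⟩
  rw [inner_apply_smul_self, hz, ← hft]
  simp only [f, map_inv₀, Complex.conj_ofReal]
  push_cast
  ring

/-- The Toeplitz–Hausdorff theorem. An affine change of `T` moves the two given values to `1`
and `0`, and a phase on `x` makes the cross term real; this is the situation of
`ofReal_mem_numericalRange_of_mem_Icc`. -/
theorem convex_numericalRange (T : E →ₗ[ℂ] E) : Convex ℝ (numericalRange T) := by
  rintro _ ⟨x, hx, rfl⟩ _ ⟨y, hy, rfl⟩ a b ha hb hab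
  set P := ⟪x, T x⟫_ℂ
  set Q := ⟪y, T y⟫_ℂ
  obtain rfl : b = 1 - a := by linarith
  rcases eq_or_ne P Q with hPQ | hPQ
  · refine ⟨x, hx, ?_⟩
    rw [← hPQ, ← add_smul, add_sub_cancel, one_smul]
  have hPQ' : P - Q ≠ 0 := sub_ne_zero.2 hPQ
  set S : Module.End ℂ E := (P - Q)⁻¹ • T + (-(P - Q)⁻¹ * Q) • 1
  have hS : ∀ v, ‖v‖ = 1 → ⟪v, S v⟫_ℂ = (⟪v, T v⟫_ℂ - Q) / (P - Q) := by
    intro v hv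
    rw [inner_smul_add_smul_one_apply_self _ _ _ hv]
    field_simp
    ring
  obtain ⟨c, hc, him⟩ :=
    Complex.exists_norm_eq_one_im_mul_add_conj_mul_eq_zero ⟪y, S x⟫_ℂ ⟪x, S y⟫_ℂ
  have hcx : ‖c • x‖ = 1 := by rw [norm_smul, hc, hx, one_mul]
  have hScx : ⟪c • x, S (c • x)⟫_ℂ = 1 := by
    rw [inner_apply_smul_self, hS x hx, div_self hPQ', Complex.conj_mul', hc]
    norm_num
  have hSy : ⟪y, S y⟫_ℂ = 0 := by rw [hS y hy, sub_self, zero_div]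
  have hcross : (⟪y, S (c • x)⟫_ℂ + ⟪c • x, S y⟫_ℂ).im = 0 := by
    rwa [map_smul, inner_smul_right, inner_smul_left]
  obtain ⟨v, hv, hSv⟩ :=
    ofReal_mem_numericalRange_of_mem_Icc hcx hy hScx hSy hcross ⟨ha, by linarith⟩
  refine ⟨v, hv, ?_⟩
  have h := hS v hv
  rw [hSv, eq_div_iff hPQ'] at h
  simp only [Complex.real_smul]
  push_cast
  linear_combination -h

theorem zero_mem_numericalRange_of_trace_eq_zero [FiniteDimensional ℂ E] [Nontrivial E]
    {T : E →ₗ[ℂ] E} (hT : T.trace ℂ E = 0) : (0 : ℂ) ∈ numericalRange T := by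
  set b := stdOrthonormalBasis ℂ E
  have hn : (Module.finrank ℂ E : ℝ) ≠ 0 := by exact_mod_cast Module.finrank_pos.ne'
  have hmem := (convex_numericalRange T).sum_mem (t := Finset.univ)
    (w := fun _ => (Module.finrank ℂ E : ℝ)⁻¹) (z := fun i => ⟪b i, T (b i)⟫_ℂ)
    (fun _ _ => by positivity) (by simp [Finset.card_univ, hn])
    (fun i _ => ⟨b i, b.orthonormal.1 i, rfl⟩)
  rwa [← Finset.smul_sum, ← trace_eq_sum_inner, hT, smul_zero] at hmem

theorem exists_orthonormalBasis_inner_apply_self_eq_zero [FiniteDimensional ℂ E] {n : ℕ}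
    (hn : Module.finrank ℂ E = n) {T : E →ₗ[ℂ] E} (hT : T.trace ℂ E = 0) :
    ∃ b : OrthonormalBasis (Fin n) ℂ E, ∀ i, ⟪b i, T (b i)⟫_ℂ = 0 := by
  induction n generalizing E with
  | zero => exact ⟨(stdOrthonormalBasis ℂ E).reindex (finCongr hn), fun i => i.elim0⟩
  | succ n ih =>
    have : Nontrivial E := Module.nontrivial_of_finrank_eq_succ hn
    have : Fact (Module.finrank ℂ E = n + 1) := ⟨hn⟩
    obtain ⟨v, hv, hTv⟩ := zero_mem_numericalRange_of_trace_eq_zero hT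
    have hv₀ : v ≠ 0 := ne_zero_of_norm_ne_zero (hv ▸ one_ne_zero)
    obtain ⟨c, hc⟩ := ih (Submodule.finrank_orthogonal_span_singleton hv₀)
      (T := T.compression (ℂ ∙ v)ᗮ)
      (by simpa [trace_eq_inner_add_trace_compression T hv, hTv] using hT)
    obtain ⟨b, hb⟩ := OrthonormalBasis.exists_coe_eq_fin_cons hv c
    refine ⟨b, fun i => ?_⟩
    rw [hb]
    cases i using Fin.cases with
    | zero => exact hTv
    | succ i => rw [Fin.cons_succ, ← inner_compression_apply]; exact hc i

end LinearMap

theorem Matrix.trace_toEuclideanLin {𝕜 α : Type*} [RCLike 𝕜] [Fintype α] [DecidableEq α]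
    (M : Matrix α α 𝕜) : (Matrix.toEuclideanLin M).trace 𝕜 _ = M.trace := by
  simp [LinearMap.trace_eq_sum_inner _ (EuclideanSpace.basisFun α 𝕜), Matrix.trace,
    EuclideanSpace.inner_single_left, Matrix.mulVec, dotProduct, Pi.single_apply]

/-- Bob's partial trace `Tr_B |ψ₂⟩⟨ψ₁|`. -/
def partialTraceOuter {α β : Type*} [Fintype β] (ψ₁ ψ₂ : EuclideanSpace ℂ (α × β)) :
    Matrix α α ℂ :=
  Matrix.of fun x x' => ∑ b, ψ₂ (x, b) * conj (ψ₁ (x', b))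

theorem trace_partialTraceOuter {α β : Type*} [Fintype α] [Fintype β]
    (ψ₁ ψ₂ : EuclideanSpace ℂ (α × β)) : (partialTraceOuter ψ₁ ψ₂).trace = ⟪ψ₁, ψ₂⟫_ℂ := by
  simp [partialTraceOuter, Matrix.trace, PiLp.inner_apply, Fintype.sum_prod_type]

theorem inner_condState_eq {dA dB : ℕ} (a : EuclideanSpace ℂ (Fin dA))
    (ψ₁ ψ₂ : EuclideanSpace ℂ (Fin dA × Fin dB)) :
    ⟪condState a ψ₁, condState a ψ₂⟫_ℂ =
      ⟪a, Matrix.toEuclideanLin (partialTraceOuter ψ₁ ψ₂) a⟫_ℂ := by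
  simp only [PiLp.inner_apply, condState, Matrix.toLpLin_apply, partialTraceOuter,
    Matrix.mulVec, dotProduct, Matrix.of_apply, RCLike.inner_apply, map_sum, map_mul,
    Complex.conj_conj, Finset.sum_mul, Finset.mul_sum]
  rw [Finset.sum_comm]
  conv_lhs => enter [2, x]; rw [Finset.sum_comm]
  rw [Finset.sum_comm]
  refine Finset.sum_congr rfl fun _ _ => Finset.sum_congr rfl fun _ _ =>
    Finset.sum_congr rfl fun _ _ => by ring

theorem stmt19_general (dA dB : ℕ) (ψ₁ ψ₂ : EuclideanSpace ℂ (Fin dA × Fin dB))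
    (horth : ⟪ψ₁, ψ₂⟫_ℂ = 0) :
    ∃ a : Fin dA → EuclideanSpace ℂ (Fin dA),
      Orthonormal ℂ a ∧ Submodule.span ℂ (Set.range a) = ⊤ ∧
      ∀ k, ⟪condState (a k) ψ₁, condState (a k) ψ₂⟫_ℂ = 0 := by
  set T := Matrix.toEuclideanLin (partialTraceOuter ψ₁ ψ₂)
  have hT : T.trace ℂ _ = 0 := by
    rw [Matrix.trace_toEuclideanLin, trace_partialTraceOuter, horth]
  obtain ⟨b, hb⟩ :=
    LinearMap.exists_orthonormalBasis_inner_apply_self_eq_zero (finrank_euclideanSpace_fin) hT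
  refine ⟨b, b.orthonormal, by simpa using b.toBasis.span_eq, fun k => ?_⟩
  rw [inner_condState_eq, hb]

/-- Walgate et al.: for any two orthogonal pure states `ψ₁, ψ₂` of
`ℂ^{d_A} ⊗ ℂ^{d_B}` there is an orthonormal basis `{a_k}` of `ℂ^{d_A}` such that the
conditional states of `ψ₁` and `ψ₂` along `a_k` are orthogonal for every `k`. -/
theorem stmt19 (dA dB : ℕ) (ψ₁ ψ₂ : EuclideanSpace ℂ (Fin dA × Fin dB))
    (h1 : ‖ψ₁‖ = 1) (h2 : ‖ψ₂‖ = 1) (horth : ⟪ψ₁, ψ₂⟫_ℂ = 0) :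
    ∃ a : Fin dA → EuclideanSpace ℂ (Fin dA),
      Orthonormal ℂ a ∧ Submodule.span ℂ (Set.range a) = ⊤ ∧
      ∀ k, ⟪condState (a k) ψ₁, condState (a k) ψ₂⟫_ℂ = 0 :=
  stmt19_general dA dB ψ₁ ψ₂ horth

end
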